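/- Let m, n ≥ 1 and let Δ ⊂ ℝ^{m+n} be the root system of osp(2m+1|2n). Set P₀ := L₀ ∪ N₀⁺, where L₀ := {±ε_i ± ε_j : 2 ≤ i < j ≤ m} ∪ {±ε_i : 2 ≤ i ≤ m} ∪ {±δ_k ± δ_l : k ≠ l} ∪ {±2δ_k : 1 ≤ k ≤ n} ∪ {±δ_k : 1 ≤ k ≤ n} ∪ {±ε_i ± δ_k : 2 ≤ i ≤ m, 1 ≤ k ≤ n} and N₀⁺ := {ε₁ ± ε_j : 2 ≤ j ≤ m} ∪ {ε₁} ∪ {ε₁ ± δ_k : 1 ≤ k ≤ n}. Then a subset P ⊆ Δ is a cominuscule parabolic set of roots of Δ if and only if w(P) = P₀ for some w ∈ W; in particular P₀ is itself a cominuscule parabolic set of roots. -/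

import Mathlib

open Pointwise

/-- A proper subset `P` of a symmetric root set `Δ` is a parabolic set of roots if
`Δ = P ∪ (-P)` and `P` is closed under sums lying in `Δ`. -/
def IsParabolic {V : Type*} [AddCommGroup V] (Δ P : Set V) : Prop :=
  P ⊂ Δ ∧ Δ = P ∪ (-P) ∧ ∀ α ∈ P, ∀ β ∈ P, α + β ∈ Δ → α + β ∈ P

/-- A parabolic set of roots is cominuscule if the sum of any two elements of its
nilradical `N⁺ = P \ (-P)` is not a root. -/
def IsCominuscule {V : Type*} [AddCommGroup V] (Δ P : Set V) : Prop :=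
  IsParabolic Δ P ∧ ∀ α ∈ P \ (-P), ∀ β ∈ P \ (-P), α + β ∉ Δ

namespace OspOdd

variable {m n : ℕ}

/-- `ℝ^{m+n}`, with coordinates indexed by `Fin m ⊕ Fin n`. -/
abbrev V (m n : ℕ) := (Fin m ⊕ Fin n) → ℝ

noncomputable def ε (i : Fin m) : V m n := Pi.single (Sum.inl i) 1

noncomputable def δ (k : Fin n) : V m n := Pi.single (Sum.inr k) 1

/-- The root system of `osp(2m+1|2n)`. -/
noncomputable def Δroot (m n : ℕ) : Set (V m n) :=
  {v | ∃ i j : Fin m, i ≠ j ∧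
      (v = ε i + ε j ∨ v = ε i - ε j ∨ v = -ε i + ε j ∨ v = -ε i - ε j)} ∪
  {v | ∃ i : Fin m, v = ε i ∨ v = -ε i} ∪
  {v | ∃ k l : Fin n, k ≠ l ∧
      (v = δ k + δ l ∨ v = δ k - δ l ∨ v = -δ k + δ l ∨ v = -δ k - δ l)} ∪
  {v | ∃ k : Fin n, v = (2 : ℝ) • δ k ∨ v = -((2 : ℝ) • δ k)} ∪
  {v | ∃ (i : Fin m) (k : Fin n),
      v = ε i + δ k ∨ v = ε i - δ k ∨ v = -ε i + δ k ∨ v = -ε i - δ k} ∪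
  {v | ∃ k : Fin n, v = δ k ∨ v = -δ k}

/-- The Levi component `L₀` (1-based `2 ≤ i < j` becomes 0-based `1 ≤ i`, `i < j`;
`ε₁` is the basis vector with 0-based index `0`). -/
noncomputable def L₀ (m n : ℕ) : Set (V m n) :=
  {v | ∃ i j : Fin m, 1 ≤ (i : ℕ) ∧ i < j ∧
      (v = ε i + ε j ∨ v = ε i - ε j ∨ v = -ε i + ε j ∨ v = -ε i - ε j)} ∪
  {v | ∃ i : Fin m, 1 ≤ (i : ℕ) ∧ (v = ε i ∨ v = -ε i)} ∪
  {v | ∃ k l : Fin n, k ≠ l ∧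
      (v = δ k + δ l ∨ v = δ k - δ l ∨ v = -δ k + δ l ∨ v = -δ k - δ l)} ∪
  {v | ∃ k : Fin n, v = (2 : ℝ) • δ k ∨ v = -((2 : ℝ) • δ k)} ∪
  {v | ∃ k : Fin n, v = δ k ∨ v = -δ k} ∪
  {v | ∃ (i : Fin m) (k : Fin n), 1 ≤ (i : ℕ) ∧
      (v = ε i + δ k ∨ v = ε i - δ k ∨ v = -ε i + δ k ∨ v = -ε i - δ k)}

/-- The nilradical `N₀⁺`. -/
noncomputable def N₀ (m n : ℕ) : Set (V m n) :=
  {v | ∃ i j : Fin m, (i : ℕ) = 0 ∧ 1 ≤ (j : ℕ) ∧ (v = ε i + ε j ∨ v = ε i - ε j)} ∪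
  {v | ∃ i : Fin m, (i : ℕ) = 0 ∧ v = ε i} ∪
  {v | ∃ (i : Fin m) (k : Fin n), (i : ℕ) = 0 ∧ (v = ε i + δ k ∨ v = ε i - δ k)}

/-- `P₀ = L₀ ⊔ N₀⁺`. -/
noncomputable def P₀ (m n : ℕ) : Set (V m n) := L₀ m n ∪ N₀ m n

/-- The action of an element of the Weyl group `W` of `so(2m+1) × sp(2n)`;
`σ, τ` are the permutations and `s, t` the (±1) signs. -/
def act (σ : Equiv.Perm (Fin m)) (τ : Equiv.Perm (Fin n))
    (s : Fin m → ℝ) (t : Fin n → ℝ) : V m n → V m n :=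
  fun v => Sum.elim (fun i => s i * v (Sum.inl (σ.symm i)))
    (fun k => t k * v (Sum.inr (τ.symm k)))

end OspOdd

/-
A half-space `{v ∈ Δ | 0 ≤ φ v}` of a symmetric root set, for a functional `φ` with values in
`{-1, 0, 1}` on the roots, is a cominuscule parabolic set: its nilradical is `{φ = 1}`, and sums
of two such roots have `φ = 2`. `P₀` is the half-space of the first `ε`-coordinate.

Conversely, every root of `osp(2m+1|2n)` is a short root `±ε_i`, `±δ_k` or a sum of two of them,
so a cominuscule `P ≠ Δ` misses some short root and contains its negative `γ` in its nilradical.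
Since `2δ_k` is a root, `γ = ±ε_i`, and a Weyl group element moves it to `ε₁`. For every other
short root `β` both `ε₁ + β` and `ε₁ - β` are roots, which puts `±β` into the Levi component;
closedness under sums then pins `P` down to the half-space of the first `ε`-coordinate.
-/

section RootSubsets

variable {V : Type*} [AddCommGroup V] {Δ P : Set V}

lemma IsParabolic.mem_or_neg_mem (h : IsParabolic Δ P) {v : V} (hv : v ∈ Δ) :
    v ∈ P ∨ -v ∈ P := by
  rw [h.2.1] at hv
  exact hv.imp_right Set.mem_neg.mp

lemma IsParabolic.neg_mem_root (h : IsParabolic Δ P) {v : V} (hv : v ∈ Δ) : -v ∈ Δ := by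
  rw [h.2.1] at hv ⊢
  simpa [or_comm] using hv

lemma IsParabolic.exists_notMem_of_subset_add {S : Set V} (h : IsParabolic Δ P)
    (hS : Δ ⊆ S ∪ (S + S)) : ∃ s ∈ S, s ∉ P := by
  by_contra! hSP
  refine h.1.2 fun v hv => ?_
  rcases hS hv with hvS | hvS
  · exact hSP v hvS
  · obtain ⟨s, hs, s', hs', rfl⟩ := Set.mem_add.mp hvS
    exact h.2.2 s (hSP s hs) s' (hSP s' hs') hv

lemma IsCominuscule.mem_and_neg_mem (h : IsCominuscule Δ P) {γ β : V} (hγ : γ ∈ P \ -P)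
    (hβ : β ∈ Δ) (h₁ : γ + β ∈ Δ) (h₂ : γ + -β ∈ Δ) : β ∈ P ∧ -β ∈ P := by
  have key : ∀ b ∈ P, γ + b ∈ Δ → -b ∈ P := fun b hb hγb => by
    by_contra hb'
    exact h.2 γ hγ b ⟨hb, fun hb'' => hb' (Set.mem_neg.mp hb'')⟩ hγb
  rcases h.1.mem_or_neg_mem hβ with hb | hb
  · exact ⟨hb, key β hb h₁⟩
  · exact ⟨by simpa using key (-β) hb h₂, hb⟩

lemma image_sdiff_neg {W : Type*} [AddCommGroup W] (e : V ≃+ W) (P : Set V) :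
    e '' (P \ -P) = e '' P \ -(e '' P) := by
  rw [Set.image_sdiff e.injective, Set.image_neg]

lemma IsCominuscule.image {W : Type*} [AddCommGroup W] (e : V ≃+ W) (h : IsCominuscule Δ P) :
    IsCominuscule (e '' Δ) (e '' P) := by
  obtain ⟨⟨hPΔ, hcover, hclosed⟩, hnil⟩ := h
  have hneg : e '' (-P) = -(e '' P) := Set.image_neg e P
  refine ⟨⟨e.injective.image_strictMono hPΔ, by rw [hcover, Set.image_union, hneg], ?_⟩, ?_⟩
  · rintro _ ⟨α, hα, rfl⟩ _ ⟨β, hβ, rfl⟩ hαβ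
    rw [← map_add, e.injective.mem_set_image] at hαβ ⊢
    exact hclosed α hα β hβ hαβ
  · rw [← image_sdiff_neg]
    rintro _ ⟨α, hα, rfl⟩ _ ⟨β, hβ, rfl⟩
    rw [← map_add, e.injective.mem_set_image]
    exact hnil α hα β hβ

lemma isCominuscule_image_iff (e : V ≃+ V) (he : e '' Δ = Δ) :
    IsCominuscule Δ (e '' P) ↔ IsCominuscule Δ P := by
  have he' : e.symm '' Δ = Δ := by
    conv_lhs => rw [← he]
    exact e.toEquiv.symm_image_image Δ
  refine ⟨fun h => ?_, fun h => by simpa only [he] using h.image e⟩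
  simpa only [he', Set.image_image, AddEquiv.symm_apply_apply, Set.image_id'] using h.image e.symm

def rootHalfSpace (Δ : Set V) (φ : V →+ ℝ) : Set V := {v | v ∈ Δ ∧ 0 ≤ φ v}

lemma isCominuscule_rootHalfSpace (hΔ : ∀ v ∈ Δ, -v ∈ Δ) (φ : V →+ ℝ)
    (hφ : ∀ v ∈ Δ, φ v = -1 ∨ φ v = 0 ∨ φ v = 1) {γ : V} (hγ : γ ∈ Δ) (hφγ : φ γ ≠ 0) :
    IsCominuscule Δ (rootHalfSpace Δ φ) := by
  refine ⟨⟨?_, ?_, ?_⟩, ?_⟩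
  · refine Set.ssubset_iff_of_subset (fun v hv => hv.1) |>.mpr ?_
    rcases hφγ.lt_or_gt with hlt | hgt
    · exact ⟨γ, hγ, fun h => hlt.not_ge h.2⟩
    · refine ⟨-γ, hΔ γ hγ, fun h => ?_⟩
      have := h.2
      rw [map_neg] at this
      linarith
  · ext v
    simp only [rootHalfSpace, Set.mem_union, Set.mem_neg, Set.mem_ofPred_eq, map_neg]
    refine ⟨fun hv => ?_, ?_⟩
    · rcases le_total 0 (φ v) with h | h
      · exact Or.inl ⟨hv, h⟩
      · exact Or.inr ⟨hΔ v hv, by linarith⟩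
    · rintro (h | h)
      · exact h.1
      · simpa using hΔ _ h.1
  · rintro α ⟨-, hα⟩ β ⟨-, hβ⟩ hαβ
    exact ⟨hαβ, by rw [map_add]; positivity⟩
  · have hnil : ∀ α ∈ rootHalfSpace Δ φ \ -rootHalfSpace Δ φ, φ α = 1 := by
      rintro α ⟨⟨hα, hα0⟩, hα'⟩
      have : 0 < φ α := by
        by_contra! hle
        exact hα' ⟨hΔ α hα, by simp only [map_neg]; linarith⟩
      rcases hφ α hα with h | h | h <;> linarith
    intro α hα β hβ hαβ
    rcases hφ _ hαβ with h | h | h <;> rw [map_add, hnil α hα, hnil β hβ] at h <;> norm_num at h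

variable {S : Set V} {φ : V →+ ℝ} {γ : V}

lemma IsParabolic.mem_of_nonneg (hP : IsParabolic Δ P) (hS : Δ ⊆ S ∪ (S + S))
    (hγ : γ ∈ P \ -P) (hφγ : 0 < φ γ)
    (hSγ : ∀ s ∈ S, s = γ ∨ s = -γ ∨ (φ s = 0 ∧ s ∈ P ∧ -s ∈ P)) {v : V} (hv : v ∈ Δ)
    (hφv : 0 ≤ φ v) : v ∈ P := by
  have hmem : ∀ s ∈ S, s ∈ P ∨ s = -γ := fun s hs => by
    rcases hSγ s hs with rfl | rfl | ⟨-, h, -⟩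
    exacts [Or.inl hγ.1, Or.inr rfl, Or.inl h]
  rcases hS hv with hvS | hvS
  · refine (hmem v hvS).resolve_right ?_
    rintro rfl
    rw [map_neg] at hφv
    linarith
  obtain ⟨s, hs, s', hs', rfl⟩ := Set.mem_add.mp hvS
  rcases eq_or_ne (s + s') 0 with h0 | h0
  · rw [h0] at hv ⊢
    simpa using hP.mem_or_neg_mem hv
  -- a summand `-γ` would force the other one to be `γ`
  have summand_mem : ∀ s ∈ S, ∀ s' ∈ S, s + s' ≠ 0 → 0 ≤ φ (s + s') → s ∈ P := by
    intro s hs s' hs' h0 hφ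
    refine (hmem s hs).resolve_right ?_
    rintro rfl
    rw [map_add, map_neg] at hφ
    rcases hSγ s' hs' with rfl | rfl | ⟨h, -⟩
    · exact h0 (neg_add_cancel _)
    · rw [map_neg] at hφ
      linarith
    · linarith
  exact hP.2.2 s (summand_mem s hs s' hs' h0 hφv) s'
    (summand_mem s' hs' s hs (by rwa [add_comm]) (by rwa [add_comm])) hv

lemma IsParabolic.nonneg_of_mem (hP : IsParabolic Δ P) (hS : Δ ⊆ S ∪ (S + S))
    (hγ : γ ∈ P \ -P) (hφγ : 0 < φ γ)
    (hSγ : ∀ s ∈ S, s = γ ∨ s = -γ ∨ (φ s = 0 ∧ s ∈ P ∧ -s ∈ P)) {v : V} (hv : v ∈ P) :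
    0 ≤ φ v := by
  have hγ' : -γ ∉ P := fun h => hγ.2 (Set.mem_neg.mpr h)
  have hγΔ : -γ ∈ Δ := hP.neg_mem_root (hP.1.subset hγ.1)
  have hneg : ∀ s ∈ S, φ s < 0 → s = -γ := fun s hs hs0 => by
    rcases hSγ s hs with rfl | rfl | ⟨h, -⟩
    · linarith
    · rfl
    · linarith
  by_contra! hφv
  rcases hS (hP.1.subset hv) with hvS | hvS
  · exact hγ' (hneg v hvS hφv ▸ hv)
  obtain ⟨s, hs, s', hs', rfl⟩ := Set.mem_add.mp hvS
  -- a summand `-γ` would put `-γ = (-γ + s') + (-s')` into `P`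
  have no_neg_summand : ∀ s ∈ S, ∀ s' ∈ S, s + s' ∈ P → φ (s + s') < 0 → 0 ≤ φ s := by
    intro s hs s' hs' hP' hφ'
    by_contra! hs0
    obtain rfl := hneg s hs hs0
    rcases hSγ s' hs' with rfl | rfl | ⟨-, -, h⟩
    · simp at hφ'
    · exact hγ' (by simpa using hP.2.2 _ hP' _ hγ.1 (by simpa using hγΔ))
    · exact hγ' (by simpa using hP.2.2 _ hP' _ h (by simpa using hγΔ))
  have h₁ := no_neg_summand s hs s' hs' hv hφv
  have h₂ := no_neg_summand s' hs' s hs (by rwa [add_comm]) (by rwa [add_comm])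
  rw [map_add] at hφv
  linarith

lemma IsParabolic.eq_rootHalfSpace (hP : IsParabolic Δ P) (hS : Δ ⊆ S ∪ (S + S))
    (hγ : γ ∈ P \ -P) (hφγ : 0 < φ γ)
    (hSγ : ∀ s ∈ S, s = γ ∨ s = -γ ∨ (φ s = 0 ∧ s ∈ P ∧ -s ∈ P)) :
    P = rootHalfSpace Δ φ := by
  ext v
  exact ⟨fun h => ⟨hP.1.subset h, hP.nonneg_of_mem hS hγ hφγ hSγ h⟩,
    fun h => hP.mem_of_nonneg hS hγ hφγ hSγ h.1 h.2⟩

end RootSubsets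

namespace OspOdd

def IsSign (a : ℝ) : Prop := a = 1 ∨ a = -1

lemma IsSign.neg {a : ℝ} (ha : IsSign a) : IsSign (-a) := by
  rcases ha with rfl | rfl <;> norm_num [IsSign]

lemma IsSign.mul {a b : ℝ} (ha : IsSign a) (hb : IsSign b) : IsSign (a * b) := by
  rcases ha with rfl | rfl <;> rcases hb with rfl | rfl <;> norm_num [IsSign]

lemma IsSign.mul_self {a : ℝ} (ha : IsSign a) : a * a = 1 := mul_self_eq_one_iff.mpr ha

lemma IsSign.eq_one_of_nonneg {a : ℝ} (ha : IsSign a) (h : 0 ≤ a) : a = 1 :=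
  ha.resolve_right fun h' => by norm_num [h'] at h

lemma exists_isSign_smul_iff {M : Type*} [AddCommGroup M] [Module ℝ M] (v x : M) :
    (∃ a, IsSign a ∧ v = a • x) ↔ v = x ∨ v = -x := by
  constructor
  · rintro ⟨a, rfl | rfl, rfl⟩ <;> simp
  · rintro (rfl | rfl)
    exacts [⟨1, Or.inl rfl, by simp⟩, ⟨-1, Or.inr rfl, by simp⟩]

lemma exists_isSign_smul_add_smul_iff {M : Type*} [AddCommGroup M] [Module ℝ M] (v x y : M) :
    (∃ a b, IsSign a ∧ IsSign b ∧ v = a • x + b • y) ↔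
      v = x + y ∨ v = x - y ∨ v = -x + y ∨ v = -x - y := by
  constructor
  · rintro ⟨a, b, rfl | rfl, rfl | rfl, rfl⟩ <;> simp [sub_eq_add_neg]
  · rintro (rfl | rfl | rfl | rfl)
    exacts [⟨1, 1, Or.inl rfl, Or.inl rfl, by simp⟩,
      ⟨1, -1, Or.inl rfl, Or.inr rfl, by simp [sub_eq_add_neg]⟩,
      ⟨-1, 1, Or.inr rfl, Or.inl rfl, by simp⟩,
      ⟨-1, -1, Or.inr rfl, Or.inr rfl, by simp [sub_eq_add_neg]⟩]

lemma exists_isSign_add_smul_iff {M : Type*} [AddCommGroup M] [Module ℝ M] (v x y : M) :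
    (∃ b, IsSign b ∧ v = x + b • y) ↔ v = x + y ∨ v = x - y := by
  constructor
  · rintro ⟨b, rfl | rfl, rfl⟩ <;> simp [sub_eq_add_neg]
  · rintro (rfl | rfl)
    exacts [⟨1, Or.inl rfl, by simp⟩, ⟨-1, Or.inr rfl, by simp [sub_eq_add_neg]⟩]

variable {m n : ℕ}

def shortRoots (m n : ℕ) : Set (V m n) := {v | ∃ x a, IsSign a ∧ v = Pi.single x a}

lemma mem_Δroot_iff {v : V m n} :
    v ∈ Δroot m n ↔ v ∈ shortRoots m n ∨
      (∃ x y, x ≠ y ∧ ∃ a b, IsSign a ∧ IsSign b ∧ v = Pi.single x a + Pi.single y b) ∨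
      ∃ k a, IsSign a ∧ v = Pi.single (Sum.inr k) (a * 2) := by
  simp only [Δroot, shortRoots, Set.mem_union, Set.mem_ofPred_eq, ← exists_isSign_smul_iff,
    ← exists_isSign_smul_add_smul_iff, ε, δ, ← Pi.single_smul', smul_eq_mul, mul_one, or_assoc]
  constructor
  · rintro (⟨i, j, hij, h⟩ | ⟨i, h⟩ | ⟨k, l, hkl, h⟩ | h | ⟨i, k, h⟩ | ⟨k, h⟩)
    · exact Or.inr (Or.inl ⟨_, _, Sum.inl_injective.ne hij, h⟩)
    · exact Or.inl ⟨_, h⟩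
    · exact Or.inr (Or.inl ⟨_, _, Sum.inr_injective.ne hkl, h⟩)
    · exact Or.inr (Or.inr h)
    · exact Or.inr (Or.inl ⟨_, _, Sum.inl_ne_inr, h⟩)
    · exact Or.inl ⟨_, h⟩
  · rintro (⟨i | k, h⟩ | ⟨i | k, j | l, hxy, a, b, ha, hb, rfl⟩ | h)
    · exact Or.inr (Or.inl ⟨i, h⟩)
    · exact Or.inr (Or.inr (Or.inr (Or.inr (Or.inr ⟨k, h⟩))))
    · exact Or.inl ⟨i, j, fun h => hxy (congrArg _ h), a, b, ha, hb, rfl⟩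
    · exact Or.inr (Or.inr (Or.inr (Or.inr (Or.inl ⟨i, l, a, b, ha, hb, rfl⟩))))
    · exact Or.inr (Or.inr (Or.inr (Or.inr (Or.inl ⟨j, k, b, a, hb, ha, add_comm _ _⟩))))
    · exact Or.inr (Or.inr (Or.inl ⟨k, l, fun h => hxy (congrArg _ h), a, b, ha, hb, rfl⟩))
    · exact Or.inr (Or.inr (Or.inr (Or.inl h)))

lemma shortRoots_subset_Δroot : shortRoots m n ⊆ Δroot m n :=
  fun _ hv => mem_Δroot_iff.mpr (Or.inl hv)

lemma single_add_single_mem_Δroot {x y : Fin m ⊕ Fin n} (hxy : x ≠ y) {a b : ℝ} (ha : IsSign a)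
    (hb : IsSign b) : (Pi.single x a + Pi.single y b : V m n) ∈ Δroot m n :=
  mem_Δroot_iff.mpr (Or.inr (Or.inl ⟨x, y, hxy, a, b, ha, hb, rfl⟩))

lemma single_inr_mul_two_mem_Δroot (k : Fin n) {a : ℝ} (ha : IsSign a) :
    (Pi.single (Sum.inr k) (a * 2) : V m n) ∈ Δroot m n :=
  mem_Δroot_iff.mpr (Or.inr (Or.inr ⟨k, a, ha, rfl⟩))

lemma Δroot_subset_shortRoots_union_add :
    Δroot m n ⊆ shortRoots m n ∪ (shortRoots m n + shortRoots m n) := by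
  intro v hv
  rcases mem_Δroot_iff.mp hv with h | ⟨x, y, -, a, b, ha, hb, rfl⟩ | ⟨k, a, ha, rfl⟩
  · exact Or.inl h
  · exact Or.inr (Set.add_mem_add ⟨x, a, ha, rfl⟩ ⟨y, b, hb, rfl⟩)
  · rw [mul_two, Pi.single_add]
    exact Or.inr (Set.add_mem_add ⟨_, a, ha, rfl⟩ ⟨_, a, ha, rfl⟩)

lemma neg_mem_Δroot {v : V m n} (hv : v ∈ Δroot m n) : -v ∈ Δroot m n := by
  rcases mem_Δroot_iff.mp hv with ⟨x, a, ha, rfl⟩ | ⟨x, y, hxy, a, b, ha, hb, rfl⟩ | ⟨k, a, ha, rfl⟩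
  · rw [← Pi.single_neg]
    exact shortRoots_subset_Δroot ⟨x, -a, ha.neg, rfl⟩
  · rw [neg_add, ← Pi.single_neg, ← Pi.single_neg]
    exact single_add_single_mem_Δroot hxy ha.neg hb.neg
  · rw [← Pi.single_neg, ← neg_mul]
    exact single_inr_mul_two_mem_Δroot k ha.neg

lemma Δroot_apply_inl {v : V m n} (hv : v ∈ Δroot m n) (i : Fin m) :
    v (Sum.inl i) = -1 ∨ v (Sum.inl i) = 0 ∨ v (Sum.inl i) = 1 := by
  rcases mem_Δroot_iff.mp hv with ⟨x, a, ha, rfl⟩ | ⟨x, y, hxy, a, b, ha, hb, rfl⟩ | ⟨k, a, ha, rfl⟩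
  · rcases ha with rfl | rfl <;> simp only [Pi.single_apply] <;> split_ifs <;> norm_num
  · rcases ha with rfl | rfl <;> rcases hb with rfl | rfl <;>
      simp only [Pi.add_apply, Pi.single_apply] <;> split_ifs <;> simp_all
  · simp

section Act

variable (σ : Equiv.Perm (Fin m)) (τ : Equiv.Perm (Fin n)) (s : Fin m → ℝ) (t : Fin n → ℝ)

lemma act_add (u v : V m n) : act σ τ s t (u + v) = act σ τ s t u + act σ τ s t v := by
  funext x; cases x <;> simp [act, mul_add]

lemma act_smul (c : ℝ) (v : V m n) : act σ τ s t (c • v) = c • act σ τ s t v := by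
  funext x; cases x <;> simp [act, mul_left_comm]

lemma act_single (x : Fin m ⊕ Fin n) (a : ℝ) :
    act σ τ s t (Pi.single x a) =
      Pi.single (σ.sumCongr τ x) (Sum.elim s t (σ.sumCongr τ x) * a) := by
  funext y
  rcases x with i | k <;> rcases y with j | l <;>
    simp [act, Pi.single_apply, Equiv.symm_apply_eq] <;> split_ifs <;> simp_all

variable {s t}

lemma act_mem_Δroot (hs : ∀ i, IsSign (s i)) (ht : ∀ k, IsSign (t k)) {v : V m n}
    (hv : v ∈ Δroot m n) : act σ τ s t v ∈ Δroot m n := by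
  have hsign : ∀ x, IsSign (Sum.elim s t x) := fun x => by cases x <;> simp [hs, ht]
  rcases mem_Δroot_iff.mp hv with ⟨x, a, ha, rfl⟩ | ⟨x, y, hxy, a, b, ha, hb, rfl⟩ | ⟨k, a, ha, rfl⟩
  · rw [act_single]
    exact shortRoots_subset_Δroot ⟨_, _, (hsign _).mul ha, rfl⟩
  · rw [act_add, act_single, act_single]
    exact single_add_single_mem_Δroot ((σ.sumCongr τ).injective.ne hxy) ((hsign _).mul ha)
      ((hsign _).mul hb)
  · rw [act_single, ← mul_assoc]
    exact single_inr_mul_two_mem_Δroot _ ((hsign _).mul ha)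

def actEquiv (hs : ∀ i, IsSign (s i)) (ht : ∀ k, IsSign (t k)) : V m n ≃ₗ[ℝ] V m n where
  toFun := act σ τ s t
  invFun := act σ.symm τ.symm (fun i => s (σ i)) (fun k => t (τ k))
  map_add' := act_add σ τ s t
  map_smul' := act_smul σ τ s t
  left_inv v := by
    funext x; cases x <;> simp [act, ← mul_assoc, (hs _).mul_self, (ht _).mul_self]
  right_inv v := by
    funext x; cases x <;> simp [act, ← mul_assoc, (hs _).mul_self, (ht _).mul_self]

lemma image_act_Δroot (hs : ∀ i, IsSign (s i)) (ht : ∀ k, IsSign (t k)) :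
    act σ τ s t '' Δroot m n = Δroot m n := by
  refine (Set.image_subset_iff.mpr fun v hv => act_mem_Δroot σ τ hs ht hv).antisymm
    fun v hv => ⟨(actEquiv σ τ hs ht).symm v, ?_, (actEquiv σ τ hs ht).apply_symm_apply v⟩
  exact act_mem_Δroot σ.symm τ.symm (fun i => hs (σ i)) (fun k => ht (τ k)) hv

end Act

lemma mem_L₀_iff {v : V (m + 1) n} : v ∈ L₀ (m + 1) n ↔
    (∃ i j : Fin (m + 1), i ≠ 0 ∧ i < j ∧
      ∃ a b, IsSign a ∧ IsSign b ∧ v = Pi.single (Sum.inl i) a + Pi.single (Sum.inl j) b) ∨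
    (∃ i : Fin (m + 1), i ≠ 0 ∧ ∃ a, IsSign a ∧ v = Pi.single (Sum.inl i) a) ∨
    (∃ k l, k ≠ l ∧
      ∃ a b, IsSign a ∧ IsSign b ∧ v = Pi.single (Sum.inr k) a + Pi.single (Sum.inr l) b) ∨
    (∃ k a, IsSign a ∧ v = Pi.single (Sum.inr k) (a * 2)) ∨
    (∃ k a, IsSign a ∧ v = Pi.single (Sum.inr k) a) ∨
    ∃ (i : Fin (m + 1)) (k : Fin n), i ≠ 0 ∧
      ∃ a b, IsSign a ∧ IsSign b ∧ v = Pi.single (Sum.inl i) a + Pi.single (Sum.inr k) b := by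
  simp only [L₀, Set.mem_union, Set.mem_ofPred_eq, ← exists_isSign_smul_add_smul_iff,
    ← exists_isSign_smul_iff, ε, δ, ← Pi.single_smul', smul_eq_mul, mul_one, or_assoc,
    Nat.one_le_iff_ne_zero, Fin.val_ne_zero_iff]

lemma mem_N₀_iff {v : V (m + 1) n} : v ∈ N₀ (m + 1) n ↔
    (∃ j : Fin (m + 1), j ≠ 0 ∧
      ∃ b, IsSign b ∧ v = Pi.single (Sum.inl 0) 1 + Pi.single (Sum.inl j) b) ∨
    v = Pi.single (Sum.inl 0) 1 ∨
    ∃ k b, IsSign b ∧ v = Pi.single (Sum.inl 0) 1 + Pi.single (Sum.inr k) b := by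
  simp only [N₀, Set.mem_union, Set.mem_ofPred_eq, ← exists_isSign_add_smul_iff, ε, δ,
    ← Pi.single_smul', smul_eq_mul, mul_one, or_assoc, Nat.one_le_iff_ne_zero,
    Fin.val_ne_zero_iff, Fin.val_eq_zero_iff, exists_and_left, exists_eq_left]

lemma P₀_subset_rootHalfSpace :
    P₀ (m + 1) n ⊆ rootHalfSpace (Δroot (m + 1) n) (Pi.evalAddMonoidHom _ (Sum.inl 0)) := by
  rintro v (hv | hv)
  · obtain ⟨i, j, hi, hij, a, b, ha, hb, rfl⟩ | ⟨i, hi, a, ha, rfl⟩ |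
        ⟨k, l, hkl, a, b, ha, hb, rfl⟩ | ⟨k, a, ha, rfl⟩ | ⟨k, a, ha, rfl⟩ |
        ⟨i, k, hi, a, b, ha, hb, rfl⟩ := mem_L₀_iff.mp hv
    · refine ⟨single_add_single_mem_Δroot (by simpa using hij.ne) ha hb, ?_⟩
      simp [hi.symm, ((Fin.zero_le i).trans_lt hij).ne]
    · exact ⟨shortRoots_subset_Δroot ⟨_, a, ha, rfl⟩, by simp [hi.symm]⟩
    · exact ⟨single_add_single_mem_Δroot (by simpa using hkl) ha hb, by simp⟩
    · exact ⟨single_inr_mul_two_mem_Δroot k ha, by simp⟩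
    · exact ⟨shortRoots_subset_Δroot ⟨_, a, ha, rfl⟩, by simp⟩
    · exact ⟨single_add_single_mem_Δroot (by simp) ha hb, by simp [hi.symm]⟩
  · obtain ⟨j, hj, b, hb, rfl⟩ | rfl | ⟨k, b, hb, rfl⟩ := mem_N₀_iff.mp hv
    · refine ⟨single_add_single_mem_Δroot (by simpa using hj.symm) (Or.inl rfl) hb, ?_⟩
      simp [hj.symm]
    · exact ⟨shortRoots_subset_Δroot ⟨_, 1, Or.inl rfl, rfl⟩, by simp⟩
    · exact ⟨single_add_single_mem_Δroot (by simp) (Or.inl rfl) hb, by simp⟩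

lemma single_add_single_mem_P₀ {x y : Fin (m + 1) ⊕ Fin n} (hxy : x ≠ y) {a b : ℝ}
    (ha : IsSign a) (hb : IsSign b)
    (h0 : 0 ≤ (Pi.single x a + Pi.single y b : V (m + 1) n) (Sum.inl 0)) :
    Pi.single x a + Pi.single y b ∈ P₀ (m + 1) n := by
  wlog hx : ∃ i, x = Sum.inl i generalizing x y a b
  · obtain ⟨k, rfl⟩ : ∃ k, x = Sum.inr k := by
      rcases x with i | k
      exacts [absurd ⟨i, rfl⟩ hx, ⟨k, rfl⟩]
    rcases y with j | l
    · rw [add_comm (Pi.single _ _)] at h0 ⊢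
      exact this hxy.symm hb ha h0 ⟨j, rfl⟩
    · exact Or.inl (mem_L₀_iff.mpr (Or.inr (Or.inr (Or.inl
        ⟨k, l, by simpa using hxy, a, b, ha, hb, rfl⟩))))
  obtain ⟨i, rfl⟩ := hx
  rcases y with j | l
  · have hij : i ≠ j := fun h => hxy (by rw [h])
    rcases eq_or_ne i 0 with rfl | hi
    · obtain rfl : a = 1 := ha.eq_one_of_nonneg (by simpa [Pi.single_apply, hij] using h0)
      exact Or.inr (mem_N₀_iff.mpr (Or.inl ⟨j, hij.symm, b, hb, rfl⟩))
    rcases eq_or_ne j 0 with rfl | hj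
    · obtain rfl : b = 1 := hb.eq_one_of_nonneg (by simpa [Pi.single_apply, hi] using h0)
      exact Or.inr (mem_N₀_iff.mpr (Or.inl ⟨i, hi, a, ha, add_comm _ _⟩))
    rcases hij.lt_or_gt with hij | hij
    · exact Or.inl (mem_L₀_iff.mpr (Or.inl ⟨i, j, hi, hij, a, b, ha, hb, rfl⟩))
    · exact Or.inl (mem_L₀_iff.mpr (Or.inl ⟨j, i, hj, hij, b, a, hb, ha, add_comm _ _⟩))
  · rcases eq_or_ne i 0 with rfl | hi
    · obtain rfl : a = 1 := ha.eq_one_of_nonneg (by simpa using h0)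
      exact Or.inr (mem_N₀_iff.mpr (Or.inr (Or.inr ⟨l, b, hb, rfl⟩)))
    · exact Or.inl (mem_L₀_iff.mpr (Or.inr (Or.inr (Or.inr (Or.inr (Or.inr
        ⟨i, l, hi, a, b, ha, hb, rfl⟩))))))

lemma rootHalfSpace_subset_P₀ :
    rootHalfSpace (Δroot (m + 1) n) (Pi.evalAddMonoidHom _ (Sum.inl 0)) ⊆ P₀ (m + 1) n := by
  rintro v ⟨hv, hv0⟩
  change 0 ≤ v (Sum.inl 0) at hv0
  rcases mem_Δroot_iff.mp hv with ⟨x, a, ha, rfl⟩ | ⟨x, y, hxy, a, b, ha, hb, rfl⟩ |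
    ⟨k, a, ha, rfl⟩
  · rcases x with i | k
    · rcases eq_or_ne i 0 with rfl | hi
      · rw [Pi.single_eq_same] at hv0
        rw [ha.eq_one_of_nonneg hv0]
        exact Or.inr (mem_N₀_iff.mpr (Or.inr (Or.inl rfl)))
      · exact Or.inl (mem_L₀_iff.mpr (Or.inr (Or.inl ⟨i, hi, a, ha, rfl⟩)))
    · exact Or.inl (mem_L₀_iff.mpr (Or.inr (Or.inr (Or.inr (Or.inr (Or.inl ⟨k, a, ha, rfl⟩))))))
  · exact single_add_single_mem_P₀ hxy ha hb hv0
  · exact Or.inl (mem_L₀_iff.mpr (Or.inr (Or.inr (Or.inr (Or.inl ⟨k, a, ha, rfl⟩)))))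

lemma P₀_eq_rootHalfSpace :
    P₀ (m + 1) n = rootHalfSpace (Δroot (m + 1) n) (Pi.evalAddMonoidHom _ (Sum.inl 0)) :=
  P₀_subset_rootHalfSpace.antisymm rootHalfSpace_subset_P₀

lemma isCominuscule_P₀ : IsCominuscule (Δroot (m + 1) n) (P₀ (m + 1) n) := by
  rw [P₀_eq_rootHalfSpace]
  exact isCominuscule_rootHalfSpace (fun _ => neg_mem_Δroot) _ (fun v hv => Δroot_apply_inl hv 0)
    (shortRoots_subset_Δroot ⟨Sum.inl 0, 1, Or.inl rfl, rfl⟩) (by simp)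

lemma IsCominuscule.exists_single_inl_mem_nilradical {P : Set (V m n)}
    (h : IsCominuscule (Δroot m n) P) : ∃ i a, IsSign a ∧ Pi.single (Sum.inl i) a ∈ P \ -P := by
  obtain ⟨_, ⟨x, a, ha, rfl⟩, hxP⟩ :=
    h.1.exists_notMem_of_subset_add Δroot_subset_shortRoots_union_add
  have hN : Pi.single x (-a) ∈ P \ -P := by
    refine ⟨?_, by rwa [Set.mem_neg, Pi.single_neg, neg_neg]⟩
    have := (h.1.mem_or_neg_mem (shortRoots_subset_Δroot ⟨x, a, ha, rfl⟩)).resolve_left hxP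
    rwa [← Pi.single_neg] at this
  rcases x with i | k
  · exact ⟨i, -a, ha.neg, hN⟩
  · refine (h.2 _ hN _ hN ?_).elim
    rw [← Pi.single_add, ← mul_two]
    exact single_inr_mul_two_mem_Δroot k ha.neg

lemma IsCominuscule.eq_P₀ {P : Set (V (m + 1) n)} (h : IsCominuscule (Δroot (m + 1) n) P)
    (hγ : Pi.single (Sum.inl 0) 1 ∈ P \ -P) : P = P₀ (m + 1) n := by
  rw [P₀_eq_rootHalfSpace]
  refine h.1.eq_rootHalfSpace (φ := Pi.evalAddMonoidHom _ (Sum.inl 0))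
    Δroot_subset_shortRoots_union_add hγ (by simp) ?_
  rintro _ ⟨x, a, ha, rfl⟩
  by_cases hx : x = Sum.inl 0
  · subst hx
    rcases ha with rfl | rfl
    · exact Or.inl rfl
    · exact Or.inr (Or.inl (Pi.single_neg _ _))
  · refine Or.inr (Or.inr ⟨by simp [Ne.symm hx], ?_⟩)
    refine h.mem_and_neg_mem hγ (shortRoots_subset_Δroot ⟨x, a, ha, rfl⟩)
      (single_add_single_mem_Δroot (Ne.symm hx) (Or.inl rfl) ha) ?_
    rw [← Pi.single_neg]
    exact single_add_single_mem_Δroot (Ne.symm hx) (Or.inl rfl) ha.neg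

end OspOdd

theorem stmt_5 (m n : ℕ) (hm : 1 ≤ m)
    (P : Set (OspOdd.V m n)) :
    (IsCominuscule (OspOdd.Δroot m n) P ↔
      ∃ (σ : Equiv.Perm (Fin m)) (τ : Equiv.Perm (Fin n)) (s : Fin m → ℝ) (t : Fin n → ℝ),
        (∀ i, s i = 1 ∨ s i = -1) ∧ (∀ k, t k = 1 ∨ t k = -1) ∧
        OspOdd.act σ τ s t '' P = OspOdd.P₀ m n) ∧
    IsCominuscule (OspOdd.Δroot m n) (OspOdd.P₀ m n) := by
  open OspOdd in
  obtain ⟨m, rfl⟩ := Nat.exists_eq_add_of_le' hm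
  refine ⟨⟨fun hP => ?_, ?_⟩, isCominuscule_P₀⟩
  · obtain ⟨i, a, ha, hN⟩ := hP.exists_single_inl_mem_nilradical
    have hs : ∀ _ : Fin (m + 1), IsSign a := fun _ => ha
    have ht : ∀ _ : Fin n, IsSign 1 := fun _ => Or.inl rfl
    let w := actEquiv (Equiv.swap i 0) 1 hs ht
    refine ⟨Equiv.swap i 0, 1, fun _ => a, fun _ => 1, hs, ht, ?_⟩
    refine ((isCominuscule_image_iff w.toAddEquiv (image_act_Δroot _ _ hs ht)).mpr hP).eq_P₀ ?_
    rw [← image_sdiff_neg]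
    refine ⟨_, hN, ?_⟩
    simp [w, actEquiv, act_single, ha.mul_self]
  · rintro ⟨σ, τ, s, t, hs, ht, himg⟩
    exact (isCominuscule_image_iff (actEquiv σ τ hs ht).toAddEquiv (image_act_Δroot σ τ hs ht)).mp
      (himg ▸ isCominuscule_P₀)
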